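/- arXiv:2407.06307 — 3 statements merged into one kernel-verified Lean document; each statement's English description precedes it below -/
import Mathlib

section
/- Let I : (0,1) → (0,1) be quasiconcave. For measurable f on (0,1) and t ∈ (0,1) define K(f,t) = inf{ ‖g‖_1 + t·‖h‖_{m_Ĩ} : f = g + h, g and h measurable on (0,1) }, where ‖g‖_1 = ∫_0^1 |g| and ‖h‖_{m_Ĩ} = sup_{0<s<1} (s/I(s)) h^*(s). Then there exists C > 0 such that for every f ∈ M_+(0,1) and every t ∈ (0,1): K(f,t) ≤ C·( ∫_0^{I^{-1}(t)} f^*(s) ds + t·sup_{I^{-1}(t)≤s<1} (s/I(s)) f^*(s) ). -/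
open MeasureTheory Set Filter
open scoped ENNReal

noncomputable section

/-- The nonincreasing rearrangement of `f` over `(0,1)`. -/
def rearr (f : ℝ → ℝ≥0∞) (t : ℝ) : ℝ≥0∞ :=
  sInf {l : ℝ≥0∞ | volume {s ∈ Set.Ioo (0:ℝ) 1 | l < f s} ≤ ENNReal.ofReal t}

/-- The maximal nonincreasing rearrangement `f^{**}(t) = (1/t) ∫_0^t f^*(s) ds`. -/
def dstar (f : ℝ → ℝ≥0∞) (t : ℝ) : ℝ≥0∞ :=
  (ENNReal.ofReal t)⁻¹ * ∫⁻ s in Set.Ioo (0:ℝ) t, rearr f s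

/-- The `L¹(0,1)` norm. -/
def lOne (f : ℝ → ℝ≥0∞) : ℝ≥0∞ := ∫⁻ t in Set.Ioo (0:ℝ) 1, f t

/-- The norm of the Marcinkiewicz-type space `m_I`. -/
def mNorm (I : ℝ → ℝ) (f : ℝ → ℝ≥0∞) : ℝ≥0∞ :=
  ⨆ t ∈ Set.Ioo (0:ℝ) 1, ENNReal.ofReal (I t) * rearr f t

/-- The norm of `m_Ĩ` where `Ĩ(t) = t / I(t)`. -/
def mNormTilde (I : ℝ → ℝ) (f : ℝ → ℝ≥0∞) : ℝ≥0∞ :=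
  ⨆ t ∈ Set.Ioo (0:ℝ) 1, ENNReal.ofReal (t / I t) * rearr f t

/-- The supremum operator `S_I f(t) = (1/I(t)) sup_{0<s≤t} I(s) f^*(s)`. -/
def SI (I : ℝ → ℝ) (f : ℝ → ℝ≥0∞) : ℝ → ℝ≥0∞ := fun t =>
  (ENNReal.ofReal (I t))⁻¹ * ⨆ s ∈ Set.Ioc (0:ℝ) t, ENNReal.ofReal (I s) * rearr f s

/-- The supremum operator `T_I f(t) = (I(t)/t) sup_{t≤s<1} (s/I(s)) f^*(s)`. -/
def TI (I : ℝ → ℝ) (f : ℝ → ℝ≥0∞) : ℝ → ℝ≥0∞ := fun t =>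
  ENNReal.ofReal (I t / t) * ⨆ s ∈ Set.Ico t 1, ENNReal.ofReal (s / I s) * rearr f s

/-- `H_I f(t) = ∫_t^1 f(s)/I(s) ds`. -/
def HI (I : ℝ → ℝ) (f : ℝ → ℝ≥0∞) : ℝ → ℝ≥0∞ := fun t =>
  ∫⁻ s in Set.Ioo t 1, f s / ENNReal.ofReal (I s)

/-- `R_I f(t) = (1/I(t)) ∫_0^t f(s) ds`. -/
def RI (I : ℝ → ℝ) (f : ℝ → ℝ≥0∞) : ℝ → ℝ≥0∞ := fun t =>
  (ENNReal.ofReal (I t))⁻¹ * ∫⁻ s in Set.Ioo (0:ℝ) t, f s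

/-- `I : (0,1) → (0,1)` is quasiconcave: a nondecreasing bijection of `(0,1)` onto `(0,1)`
with `I(t)/t` nonincreasing, `I(0+) = 0` and `I(1-) = 1`. -/
def Quasiconcave (I : ℝ → ℝ) : Prop :=
  Set.BijOn I (Set.Ioo 0 1) (Set.Ioo 0 1) ∧
  MonotoneOn I (Set.Ioo 0 1) ∧
  AntitoneOn (fun t => I t / t) (Set.Ioo 0 1) ∧
  Tendsto I (nhdsWithin 0 (Set.Ioo 0 1)) (nhds 0) ∧
  Tendsto I (nhdsWithin 1 (Set.Ioo 0 1)) (nhds 1)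

/-- Condition (★): `∫_0^t I(s)/s ds ≲ I(t)`. -/
def StarCond (I : ℝ → ℝ) : Prop :=
  ∃ C : ℝ, 0 < C ∧ ∀ t ∈ Set.Ioo (0:ℝ) 1,
    ∫⁻ s in Set.Ioo (0:ℝ) t, ENNReal.ofReal (I s / s) ≤ ENNReal.ofReal (C * I t)

/-- The average property: `∫_0^t ds/I(s) ≲ t/I(t)`. -/
def AvgProp (I : ℝ → ℝ) : Prop :=
  ∃ C : ℝ, 0 < C ∧ ∀ t ∈ Set.Ioo (0:ℝ) 1,
    ∫⁻ s in Set.Ioo (0:ℝ) t, ENNReal.ofReal (1 / I s) ≤ ENNReal.ofReal (C * (t / I t))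

/-- The condition `∫_t^1 I(s)/s² ds ≲ (1/t) ∫_0^t I(s)/s ds`. -/
def MaxCond (I : ℝ → ℝ) : Prop :=
  ∃ C : ℝ, 0 < C ∧ ∀ t ∈ Set.Ioo (0:ℝ) 1,
    ∫⁻ s in Set.Ioo t 1, ENNReal.ofReal (I s / s ^ 2) ≤
      ENNReal.ofReal (C / t) * ∫⁻ s in Set.Ioo (0:ℝ) t, ENNReal.ofReal (I s / s)

/-- The class `𝒬` of quasiconcave functions. -/
def ClassQ (I : ℝ → ℝ) : Prop :=
  Quasiconcave I ∧ StarCond I ∧ AvgProp I ∧ MaxCond I ∧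
  ∃ c d : ℝ,
    IsLUB {l : ℝ | 0 ≤ l ∧ ∀ t ∈ Set.Ioo (0:ℝ) 1,
      ENNReal.ofReal (l * (I t / t ^ 2 - 1)) ≤
        ∫⁻ s in Set.Ioo t 1, ENNReal.ofReal (I s / s ^ 3)} c ∧
    IsLeast {e : ℝ | 0 < e ∧ ∀ t ∈ Set.Ioo (0:ℝ) 1,
      ∫⁻ s in Set.Ioo t 1, ENNReal.ofReal (I s / s ^ 2) ≤
        ENNReal.ofReal (e * (I t / t))} d ∧
    (1 - c) * d ≤ c

/-- The `Δ₂` condition: `I(2t) ≤ C I(t)` for `t ∈ (0,1/2)`. -/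
def Delta2 (I : ℝ → ℝ) : Prop :=
  ∃ C : ℝ, 0 < C ∧ ∀ t ∈ Set.Ioo (0:ℝ) (1/2), I (2 * t) ≤ C * I t

/-- A rearrangement-invariant Banach function norm on `M₊(0,1)`. -/
def IsRiNorm (ρ : (ℝ → ℝ≥0∞) → ℝ≥0∞) : Prop :=
  (∀ f : ℝ → ℝ≥0∞, Measurable f →
      (ρ f = 0 ↔ f =ᵐ[volume.restrict (Set.Ioo (0:ℝ) 1)] 0)) ∧
  (∀ f : ℝ → ℝ≥0∞, Measurable f → ∀ a : ℝ, 0 ≤ a →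
      ρ (fun t => ENNReal.ofReal a * f t) = ENNReal.ofReal a * ρ f) ∧
  (∀ f g : ℝ → ℝ≥0∞, Measurable f → Measurable g →
      ρ (fun t => f t + g t) ≤ ρ f + ρ g) ∧
  (∀ f g : ℝ → ℝ≥0∞, Measurable f → Measurable g →
      (∀ᵐ t ∂(volume.restrict (Set.Ioo (0:ℝ) 1)), f t ≤ g t) → ρ f ≤ ρ g) ∧
  (∀ (fn : ℕ → ℝ → ℝ≥0∞) (f : ℝ → ℝ≥0∞), (∀ n, Measurable (fn n)) → Measurable f →
      (∀ᵐ t ∂(volume.restrict (Set.Ioo (0:ℝ) 1)), Monotone (fun n => fn n t)) →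
      (∀ᵐ t ∂(volume.restrict (Set.Ioo (0:ℝ) 1)), (⨆ n, fn n t) = f t) →
      (⨆ n, ρ (fn n)) = ρ f) ∧
  (ρ (fun _ => 1) < ⊤) ∧
  (∃ c : ℝ, 0 < c ∧ ∀ f : ℝ → ℝ≥0∞, Measurable f →
      ∫⁻ t in Set.Ioo (0:ℝ) 1, f t ≤ ENNReal.ofReal c * ρ f) ∧
  (∀ f : ℝ → ℝ≥0∞, Measurable f → ρ f = ρ (rearr f))

/-- The associate norm `ρ'`. -/
def assoc (ρ : (ℝ → ℝ≥0∞) → ℝ≥0∞) (f : ℝ → ℝ≥0∞) : ℝ≥0∞ :=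
  ⨆ (g : ℝ → ℝ≥0∞) (_ : Measurable g ∧ ρ g ≤ 1),
    ∫⁻ t in Set.Ioo (0:ℝ) 1, f t * g t

/-- The optimal target norm `‖f‖_{Y_X}` of the r.i. norm `ρ = ‖·‖_X` under `H_I`. -/
def optTargetNorm (I : ℝ → ℝ) (ρ : (ℝ → ℝ≥0∞) → ℝ≥0∞) (f : ℝ → ℝ≥0∞) : ℝ≥0∞ :=
  ⨆ (g : ℝ → ℝ≥0∞) (_ : Measurable g ∧ assoc ρ (RI I (rearr g)) ≤ 1),
    ∫⁻ t in Set.Ioo (0:ℝ) 1, rearr f t * rearr g t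

/-- The optimal domain norm `‖f‖_{X_Y} = sup_{h ∼ f} ‖H_I h‖_Y`. -/
def optDomainNorm (I : ℝ → ℝ) (ρY : (ℝ → ℝ≥0∞) → ℝ≥0∞) (f : ℝ → ℝ≥0∞) : ℝ≥0∞ :=
  ⨆ (h : ℝ → ℝ≥0∞)
    (_ : Measurable h ∧ ∀ t ∈ Set.Ioo (0:ℝ) 1, rearr h t = rearr f t),
      ρY (HI I h)

/-- `H_I : X → Y` boundedly. -/
def HIBounded (I : ℝ → ℝ) (ρX ρY : (ℝ → ℝ≥0∞) → ℝ≥0∞) : Prop :=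
  ∃ C : ℝ, 0 < C ∧ ∀ f : ℝ → ℝ≥0∞, Measurable f →
    ρY (HI I f) ≤ ENNReal.ofReal C * ρX f

/-- `X` is the optimal domain space for `Y` under `H_I`. -/
def IsOptimalDomain (I : ℝ → ℝ) (ρX ρY : (ℝ → ℝ≥0∞) → ℝ≥0∞) : Prop :=
  HIBounded I ρX ρY ∧
  ∀ ρZ : (ℝ → ℝ≥0∞) → ℝ≥0∞, IsRiNorm ρZ → HIBounded I ρZ ρY →
    ∃ C : ℝ, 0 < C ∧ ∀ f : ℝ → ℝ≥0∞, Measurable f →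
      ρX f ≤ ENNReal.ofReal C * ρZ f

/-- `Y` is the optimal target space for `X` under `H_I`. -/
def IsOptimalTarget (I : ℝ → ℝ) (ρX ρY : (ℝ → ℝ≥0∞) → ℝ≥0∞) : Prop :=
  HIBounded I ρX ρY ∧
  ∀ ρZ : (ℝ → ℝ≥0∞) → ℝ≥0∞, IsRiNorm ρZ → HIBounded I ρX ρZ →
    ∃ C : ℝ, 0 < C ∧ ∀ f : ℝ → ℝ≥0∞, Measurable f →
      ρZ f ≤ ENNReal.ofReal C * ρY f

/-- The `K`-functional for the couple `(L¹, m_Ĩ)` over `(0,1)`. -/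
def KoneMTilde (I : ℝ → ℝ) (f : ℝ → ℝ≥0∞) (t : ℝ) : ℝ≥0∞ :=
  ⨅ (g : ℝ → ℝ≥0∞) (h : ℝ → ℝ≥0∞)
    (_ : Measurable g ∧ Measurable h ∧ ∀ s ∈ Set.Ioo (0:ℝ) 1, f s = g s + h s),
      (∫⁻ s in Set.Ioo (0:ℝ) 1, g s) +
        ENNReal.ofReal t * ⨆ s ∈ Set.Ioo (0:ℝ) 1, ENNReal.ofReal (s / I s) * rearr h s

/-!
Split `f` at the height `λ = f^*(b)`, `b = I⁻¹(t)`, into `g = (f - λ)₊` and `h = min f λ`.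
Comparing level sets through the layer cake formula gives `‖g‖₁ ≤ ∫_0^b f^*`. Beyond `b`,
`h^* ≤ f^*`; below `b`, `h^* ≤ λ` and `s / I(s) ≤ b / I(b) = b / t` because `I(s)/s` is
nonincreasing. Hence `t ‖h‖_{m_Ĩ} ≤ t sup_{s ≥ b} (s / I(s)) f^*(s) + b λ`, and `b λ ≤ ∫_0^b f^*`
since `f^*` is nonincreasing; so `C = 2` works.
-/

lemma volume_Ioi_inter_ofReal_lt (a : ℝ≥0∞) :
    volume (Ioi (0:ℝ) ∩ {u | ENNReal.ofReal u < a}) = a := by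
  rcases eq_or_ne a ⊤ with rfl | ha
  · simp [Real.volume_Ioi]
  · have hset : Ioi (0:ℝ) ∩ {u | ENNReal.ofReal u < a} = Ioo 0 a.toReal := by
      ext u
      simp only [mem_inter_iff, mem_Ioi, mem_ofPred_eq, mem_Ioo, and_congr_right_iff]
      exact fun hu => ENNReal.ofReal_lt_iff_lt_toReal hu.le ha
    rw [hset, Real.volume_Ioo, sub_zero, ENNReal.ofReal_toReal ha]

theorem lintegral_eq_lintegral_meas_ofReal_lt {α : Type*} [MeasurableSpace α] (μ : Measure α)
    [SFinite μ] {g : α → ℝ≥0∞} (hg : Measurable g) :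
    ∫⁻ x, g x ∂μ = ∫⁻ u in Ioi (0:ℝ), μ {x | ENNReal.ofReal u < g x} := by
  set E := {p : α × ℝ | p.2 ∈ Ioi 0 ∧ ENNReal.ofReal p.2 < g p.1}
  have hE : MeasurableSet E := (measurable_snd measurableSet_Ioi).inter
    (measurableSet_lt (ENNReal.measurable_ofReal.comp measurable_snd) (hg.comp measurable_fst))
  calc ∫⁻ x, g x ∂μ = ∫⁻ x, volume (Prod.mk x ⁻¹' E) ∂μ :=
        lintegral_congr fun x => (volume_Ioi_inter_ofReal_lt (g x)).symm
    _ = μ.prod volume E := (Measure.prod_apply hE).symm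
    _ = ∫⁻ u, μ ((fun x => (x, u)) ⁻¹' E) := Measure.prod_apply_symm hE
    _ = ∫⁻ u, (Ioi 0).indicator (fun u => μ {x | ENNReal.ofReal u < g x}) u := by
        refine lintegral_congr fun u => ?_
        by_cases hu : 0 < u <;> simp [E, hu]
    _ = _ := lintegral_indicator measurableSet_Ioi _

lemma rearr_antitone (f : ℝ → ℝ≥0∞) : Antitone (rearr f) :=
  fun _ _ hab => sInf_le_sInf fun _ hl => hl.trans (ENNReal.ofReal_le_ofReal hab)

lemma measurable_rearr (f : ℝ → ℝ≥0∞) : Measurable (rearr f) :=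
  (rearr_antitone f).measurable

lemma rearr_mono {f g : ℝ → ℝ≥0∞} (h : ∀ x ∈ Ioo (0:ℝ) 1, g x ≤ f x) (s : ℝ) :
    rearr g s ≤ rearr f s := by
  refine sInf_le_sInf fun l hl => le_trans (measure_mono ?_) hl
  exact fun x hx => ⟨hx.1, hx.2.trans_le (h x hx.1)⟩

lemma rearr_le_of_forall_le {f : ℝ → ℝ≥0∞} {c : ℝ≥0∞} (hf : ∀ x, f x ≤ c) (s : ℝ) :
    rearr f s ≤ c :=
  sInf_le <| by simp [fun x => not_lt.2 (hf x)]

/-- The infimum defining `rearr f s` is attained. -/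
lemma measure_rearr_lt_le (f : ℝ → ℝ≥0∞) (s : ℝ) :
    volume {x ∈ Ioo (0:ℝ) 1 | rearr f s < f x} ≤ ENNReal.ofReal s := by
  obtain ⟨l, hl_anti, hl_lim, hl_mem⟩ := exists_seq_tendsto_sInf
    (S := {l : ℝ≥0∞ | volume {x ∈ Ioo (0:ℝ) 1 | l < f x} ≤ ENNReal.ofReal s})
    ⟨⊤, by simp⟩ (OrderBot.bddBelow _)
  have hunion : {x ∈ Ioo (0:ℝ) 1 | rearr f s < f x} = ⋃ n, {x ∈ Ioo (0:ℝ) 1 | l n < f x} := by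
    ext x
    simp only [mem_ofPred_eq, mem_iUnion]
    refine ⟨fun ⟨hx, hlt⟩ => ?_, fun ⟨n, hx, hlt⟩ => ⟨hx, (sInf_le (hl_mem n)).trans_lt hlt⟩⟩
    obtain ⟨n, hn⟩ := (hl_lim.eventually (gt_mem_nhds hlt)).exists
    exact ⟨n, hx, hn⟩
  have hmono : Monotone fun n => {x ∈ Ioo (0:ℝ) 1 | l n < f x} :=
    fun m n hmn x hx => ⟨hx.1, (hl_anti hmn).trans_lt hx.2⟩
  rw [hunion, hmono.measure_iUnion]
  exact iSup_le hl_mem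

lemma lt_rearr_of_lt_measure {f : ℝ → ℝ≥0∞} {s : ℝ} {u : ℝ≥0∞}
    (h : ENNReal.ofReal s < volume {x ∈ Ioo (0:ℝ) 1 | u < f x}) : u < rearr f s := by
  by_contra! hle
  refine (h.trans_le (le_trans (measure_mono ?_) (measure_rearr_lt_le f s))).false
  exact fun x hx => ⟨hx.1, hle.trans_lt hx.2⟩

lemma ofReal_mul_rearr_le_setLIntegral (f : ℝ → ℝ≥0∞) (b : ℝ) :
    ENNReal.ofReal b * rearr f b ≤ ∫⁻ s in Ioo (0:ℝ) b, rearr f s :=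
  calc ENNReal.ofReal b * rearr f b = ∫⁻ _ in Ioo (0:ℝ) b, rearr f b := by
        rw [setLIntegral_const, Real.volume_Ioo, sub_zero, mul_comm]
    _ ≤ _ := setLIntegral_mono (measurable_rearr f) fun s hs => rearr_antitone f hs.2.le

lemma setLIntegral_tsub_rearr_le {f : ℝ → ℝ≥0∞} (hf : Measurable f) {b : ℝ} (hb : 0 ≤ b) :
    ∫⁻ s in Ioo (0:ℝ) 1, (f s - rearr f b) ≤ ∫⁻ s in Ioo (0:ℝ) b, rearr f s := by
  have hg : Measurable fun s => f s - rearr f b := hf.sub measurable_const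
  rw [lintegral_eq_lintegral_meas_ofReal_lt _ hg,
    lintegral_eq_lintegral_meas_ofReal_lt _ (measurable_rearr f)]
  refine lintegral_mono fun u => ?_
  rw [Measure.restrict_apply (measurableSet_lt measurable_const hg),
    Measure.restrict_apply (measurableSet_lt measurable_const (measurable_rearr f))]
  set d := volume {x ∈ Ioo (0:ℝ) 1 | rearr f b + ENNReal.ofReal u < f x}
  have hlevel : {x | ENNReal.ofReal u < f x - rearr f b} ∩ Ioo 0 1 =
      {x ∈ Ioo (0:ℝ) 1 | rearr f b + ENNReal.ofReal u < f x} := by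
    ext x
    simp only [mem_inter_iff, mem_ofPred_eq, lt_tsub_iff_left]
    exact and_comm
  have hdb : d ≤ ENNReal.ofReal b := by
    refine le_trans (measure_mono fun x hx => ?_) (measure_rearr_lt_le f b)
    exact ⟨hx.1, le_self_add.trans_lt hx.2⟩
  have hd : d ≠ ⊤ := (hdb.trans_lt ENNReal.ofReal_lt_top).ne
  have hsub : Ioo (0:ℝ) d.toReal ⊆ {s | ENNReal.ofReal u < rearr f s} ∩ Ioo 0 b := by
    intro s hs
    have hsd : ENNReal.ofReal s < d := (ENNReal.ofReal_lt_iff_lt_toReal hs.1.le hd).2 hs.2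
    refine ⟨lt_rearr_of_lt_measure (hsd.trans_le (measure_mono fun x hx => ?_)), hs.1,
      hs.2.trans_le (ENNReal.toReal_le_of_le_ofReal hb hdb)⟩
    exact ⟨hx.1, le_add_self.trans_lt hx.2⟩
  calc volume ({x | ENNReal.ofReal u < f x - rearr f b} ∩ Ioo 0 1)
        = volume (Ioo (0:ℝ) d.toReal) := by
        rw [hlevel, Real.volume_Ioo, sub_zero, ENNReal.ofReal_toReal hd]
    _ ≤ _ := measure_mono hsub

lemma Quasiconcave.div_le_div_of_le {I : ℝ → ℝ} (hI : Quasiconcave I) {s b : ℝ}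
    (hs : s ∈ Ioo (0:ℝ) 1) (hb : b ∈ Ioo (0:ℝ) 1) (hsb : s ≤ b) : s / I s ≤ b / I b := by
  have hIb : 0 < I b / b := div_pos (hI.1.mapsTo hb).1 hb.1
  rw [← inv_div, ← inv_div (I b)]
  exact inv_anti₀ hIb (hI.2.2.1 hs hb hsb)

lemma iSup_rearr_min_le {I : ℝ → ℝ} (hI : Quasiconcave I) {b : ℝ} (hb : b ∈ Ioo (0:ℝ) 1)
    (f : ℝ → ℝ≥0∞) (c : ℝ≥0∞) :
    ⨆ s ∈ Ioo (0:ℝ) 1, ENNReal.ofReal (s / I s) * rearr (fun x => min (f x) c) s ≤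
      (⨆ s ∈ Ico b 1, ENNReal.ofReal (s / I s) * rearr f s) + ENNReal.ofReal (b / I b) * c := by
  refine iSup₂_le fun s hs => ?_
  rcases le_or_gt b s with hbs | hsb
  · refine le_add_right ((mul_le_mul' le_rfl (rearr_mono (fun x _ => min_le_left _ _) s)).trans ?_)
    exact le_iSup₂ (f := fun s (_ : s ∈ Ico b 1) => ENNReal.ofReal (s / I s) * rearr f s) s
      ⟨hbs, hs.2⟩
  · refine le_add_left (mul_le_mul' (ENNReal.ofReal_le_ofReal ?_)
      (rearr_le_of_forall_le (fun x => min_le_right _ _) s))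
    exact hI.div_le_div_of_le hs hb hsb.le

lemma KoneMTilde_le_of_eq_add (I : ℝ → ℝ) {f g h : ℝ → ℝ≥0∞} (hg : Measurable g)
    (hh : Measurable h) (hfgh : ∀ s ∈ Ioo (0:ℝ) 1, f s = g s + h s) (t : ℝ) :
    KoneMTilde I f t ≤ (∫⁻ s in Ioo (0:ℝ) 1, g s) +
      ENNReal.ofReal t * ⨆ s ∈ Ioo (0:ℝ) 1, ENNReal.ofReal (s / I s) * rearr h s :=
  iInf₂_le_of_le g h (iInf_le _ ⟨hg, hh, hfgh⟩)

/-- Proposition 4.5 / `prop:KFunctional2`.  For quasiconcave `I`,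
`K(f, t, L¹, m_Ĩ) ≲ ∫_0^{I⁻¹(t)} f^* + t · sup_{I⁻¹(t)≤s<1} (s/I(s)) f^*(s)`. -/
theorem statement13 (I : ℝ → ℝ) (hqc : Quasiconcave I)
    (J : ℝ → ℝ) (hJ : Set.InvOn J I (Set.Ioo 0 1) (Set.Ioo 0 1))
    (hJmaps : Set.MapsTo J (Set.Ioo 0 1) (Set.Ioo 0 1)) :
    ∃ C : ℝ, 0 < C ∧ ∀ f : ℝ → ℝ≥0∞, Measurable f → ∀ t ∈ Set.Ioo (0:ℝ) 1,
      KoneMTilde I f t ≤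
        ENNReal.ofReal C *
          ((∫⁻ s in Set.Ioo (0:ℝ) (J t), rearr f s) +
            ENNReal.ofReal t *
              ⨆ s ∈ Set.Ico (J t) 1, ENNReal.ofReal (s / I s) * rearr f s) := by
  refine ⟨2, two_pos, fun f hf t ht => ?_⟩
  have hb : J t ∈ Ioo (0:ℝ) 1 := hJmaps ht
  set c := rearr f (J t)
  set A := ∫⁻ s in Ioo (0:ℝ) (J t), rearr f s
  set S := ⨆ s ∈ Ico (J t) 1, ENNReal.ofReal (s / I s) * rearr f s
  have hscale : ENNReal.ofReal t * ENNReal.ofReal (J t / I (J t)) = ENNReal.ofReal (J t) := by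
    rw [hJ.2 ht, ← ENNReal.ofReal_mul ht.1.le, mul_div_cancel₀ _ ht.1.ne']
  calc KoneMTilde I f t
      ≤ (∫⁻ s in Ioo (0:ℝ) 1, (f s - c)) + ENNReal.ofReal t *
          ⨆ s ∈ Ioo (0:ℝ) 1, ENNReal.ofReal (s / I s) * rearr (fun x => min (f x) c) s :=
        KoneMTilde_le_of_eq_add I (hf.sub measurable_const) (hf.min measurable_const)
          (fun s _ => tsub_add_min.symm) t
    _ ≤ A + ENNReal.ofReal t * (S + ENNReal.ofReal (J t / I (J t)) * c) := by
        gcongr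
        · exact setLIntegral_tsub_rearr_le hf hb.1.le
        · exact iSup_rearr_min_le hqc hb f c
    _ = A + ENNReal.ofReal t * S + ENNReal.ofReal (J t) * c := by
        rw [mul_add, ← mul_assoc, hscale, add_assoc]
    _ ≤ A + ENNReal.ofReal t * S + A := by
        gcongr
        exact ofReal_mul_rearr_le_setLIntegral f (J t)
    _ ≤ ENNReal.ofReal 2 * (A + ENNReal.ofReal t * S) := by
        rw [ENNReal.ofReal_ofNat, two_mul]
        gcongr
        exact le_self_add
end
end

section
/- Let I : (0,1) → (0,1) be quasiconcave and let f ∈ M_+(0,1). Then for every t ∈ (0,1): (1/I(t)) · sup_{0<s≤t} [ I(s) · sup_{s≤r<1} (1/I(r)) ∫_0^r f^*(z) dz ] = sup_{t≤r<1} (1/I(r)) ∫_0^r f^*(z) dz. In other words, setting (G_I f)(t) = sup_{t≤r<1} (1/I(r)) ∫_0^r f^*(z) dz (a nonincreasing function of t), one has S_I(G_I f) = G_I f on (0,1). -/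
open MeasureTheory Set Filter
open scoped ENNReal

noncomputable section

/-- Lemma 4.9 / `lem:RIFGIFvZ`, key identity.  For quasiconcave `I` and
`f ∈ M₊(0,1)`, with `G_I f (t) = sup_{t≤r<1} (1/I(r)) ∫_0^r f^*`, one has
`S_I (G_I f) = G_I f` on `(0,1)` (the rearrangement of the nonincreasing function `G_I f`
being replaced by the function itself). -/
theorem statement15 (I : ℝ → ℝ) (hqc : Quasiconcave I)
    (f : ℝ → ℝ≥0∞) (hf : Measurable f) :
    ∀ t ∈ Set.Ioo (0:ℝ) 1,
      (ENNReal.ofReal (I t))⁻¹ *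
          ⨆ s ∈ Set.Ioc (0:ℝ) t, ENNReal.ofReal (I s) *
            ⨆ r ∈ Set.Ico s 1,
              (ENNReal.ofReal (I r))⁻¹ * ∫⁻ z in Set.Ioo (0:ℝ) r, rearr f z
        = ⨆ r ∈ Set.Ico t 1,
            (ENNReal.ofReal (I r))⁻¹ * ∫⁻ z in Set.Ioo (0:ℝ) r, rearr f z := by

  obtain ⟨hbij, hmono, -, -, -⟩ := hqc
  intro t ht
  set F : ℝ → ℝ≥0∞ := fun r => (ENNReal.ofReal (I r))⁻¹ * ∫⁻ z in Set.Ioo (0:ℝ) r, rearr f z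
    with hFdef
  have hI : ∀ r ∈ Set.Ioo (0:ℝ) 1, 0 < I r := fun r hr => (hbij.mapsTo hr).1
  have hItne : ENNReal.ofReal (I t) ≠ 0 := by
    simp [ENNReal.ofReal_eq_zero, not_le, hI t ht]
  have hIttop : ENNReal.ofReal (I t) ≠ ⊤ := ENNReal.ofReal_ne_top
  have key : (⨆ s ∈ Set.Ioc (0:ℝ) t, ENNReal.ofReal (I s) * ⨆ r ∈ Set.Ico s 1, F r)
      = ENNReal.ofReal (I t) * ⨆ r ∈ Set.Ico t 1, F r := by
    apply le_antisymm
    · refine iSup₂_le fun s hs => ?_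
      have hs01 : s ∈ Set.Ioo (0:ℝ) 1 := ⟨hs.1, lt_of_le_of_lt hs.2 ht.2⟩
      rw [ENNReal.mul_iSup]
      refine iSup_le fun r => ?_
      rw [ENNReal.mul_iSup]
      refine iSup_le fun hr => ?_
      rcases le_or_gt t r with h | h
      · -- r ≥ t : term is already in the sup over Ico t 1
        calc ENNReal.ofReal (I s) * F r ≤ ENNReal.ofReal (I t) * F r := by
              gcongr
              exact hmono hs01 ht hs.2
          _ ≤ ENNReal.ofReal (I t) * ⨆ r' ∈ Set.Ico t 1, F r' := by
              gcongr
              exact le_iSup₂ (f := fun r' _ => F r') r ⟨h, hr.2⟩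
      · -- r < t
        have hr01 : r ∈ Set.Ioo (0:ℝ) 1 := ⟨lt_of_lt_of_le hs.1 hr.1, hr.2⟩
        have hIrne : ENNReal.ofReal (I r) ≠ 0 := by
          simp [ENNReal.ofReal_eq_zero, not_le, hI r hr01]
        have h1 : ENNReal.ofReal (I s) * F r ≤ ∫⁻ z in Set.Ioo (0:ℝ) r, rearr f z := by
          rw [hFdef]
          simp only
          rw [← mul_assoc]
          calc ENNReal.ofReal (I s) * (ENNReal.ofReal (I r))⁻¹ *
                ∫⁻ z in Set.Ioo (0:ℝ) r, rearr f z
              ≤ ENNReal.ofReal (I r) * (ENNReal.ofReal (I r))⁻¹ *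
                ∫⁻ z in Set.Ioo (0:ℝ) r, rearr f z := by
                gcongr
                exact hmono hs01 hr01 hr.1
            _ = ∫⁻ z in Set.Ioo (0:ℝ) r, rearr f z := by
                rw [ENNReal.mul_inv_cancel hIrne ENNReal.ofReal_ne_top, one_mul]
        have h2 : (∫⁻ z in Set.Ioo (0:ℝ) r, rearr f z) ≤
            ∫⁻ z in Set.Ioo (0:ℝ) t, rearr f z :=
          lintegral_mono_set (Set.Ioo_subset_Ioo le_rfl h.le)
        have h3 : (∫⁻ z in Set.Ioo (0:ℝ) t, rearr f z) = ENNReal.ofReal (I t) * F t := by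
          rw [hFdef]
          simp only
          rw [← mul_assoc, ENNReal.mul_inv_cancel hItne hIttop, one_mul]
        calc ENNReal.ofReal (I s) * F r ≤ ENNReal.ofReal (I t) * F t :=
              (h1.trans h2).trans_eq h3
          _ ≤ ENNReal.ofReal (I t) * ⨆ r' ∈ Set.Ico t 1, F r' := by
              gcongr
              exact le_iSup₂ (f := fun r' _ => F r') t ⟨le_rfl, ht.2⟩
    · exact le_iSup₂_of_le t ⟨ht.1, le_rfl⟩ le_rfl
  rw [key, ← mul_assoc, ENNReal.inv_mul_cancel hItne hIttop, one_mul]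
end
end

section
/- Let Φ : [0,∞) → [0,∞) be twice differentiable on (0,∞), strictly increasing and convex on (0,∞), with Φ(0) = 0 and with √Φ concave. Then: (a) there exist c₁, c₂ > 0 such that c₁·Φ(t)/t ≤ Φ'(t) ≤ c₂·Φ(t)/t for all t ∈ (0,∞); (b) defining J(t) = t·log(2/t) / Φ^{-1}(log(2/t)) for t ∈ (0,1/2), there exist δ ∈ (0,1/2) and C > 0 such that ∫_0^t J(s)/s ds ≤ C·J(t) for all t ∈ (0,δ]. -/
open MeasureTheory Set Filter
open scoped ENNReal

noncomputable section

/-- Section 5, product probability spaces; cf. Proposition 5.2.  For `Φ`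
twice differentiable, strictly increasing and convex on `(0,∞)`, `Φ(0)=0`, `√Φ` concave:
(a) `Φ'(t) ≈ Φ(t)/t` on `(0,∞)`; (b) the function
`J(t) = t log(2/t)/Φ⁻¹(log(2/t))` satisfies `∫_0^t J(s)/s ds ≲ J(t)` near zero. -/
theorem statement19 (Φ : ℝ → ℝ) (Ψ : ℝ → ℝ)
    (hmaps : ∀ t : ℝ, 0 ≤ t → 0 ≤ Φ t) (h0 : Φ 0 = 0)
    (hdiff : ∀ x ∈ Set.Ioi (0:ℝ),
      DifferentiableAt ℝ Φ x ∧ DifferentiableAt ℝ (deriv Φ) x)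
    (hmono : StrictMonoOn Φ (Set.Ioi 0))
    (hconv : ConvexOn ℝ (Set.Ioi 0) Φ)
    (hsqrt : ConcaveOn ℝ (Set.Ici 0) (fun t => Real.sqrt (Φ t)))
    (hΨ : Set.InvOn Ψ Φ (Set.Ici 0) (Set.Ici 0))
    (hΨmaps : Set.MapsTo Ψ (Set.Ici 0) (Set.Ici 0)) :
    (∃ c₁ c₂ : ℝ, 0 < c₁ ∧ 0 < c₂ ∧ ∀ t ∈ Set.Ioi (0:ℝ),
        c₁ * (Φ t / t) ≤ deriv Φ t ∧ deriv Φ t ≤ c₂ * (Φ t / t)) ∧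
    (∃ δ ∈ Set.Ioo (0:ℝ) (1/2), ∃ C : ℝ, 0 < C ∧ ∀ t ∈ Set.Ioc (0:ℝ) δ,
        ∫⁻ s in Set.Ioo (0:ℝ) t,
            ENNReal.ofReal ((s * Real.log (2 / s) / Ψ (Real.log (2 / s))) / s) ≤
          ENNReal.ofReal (C * (t * Real.log (2 / t) / Ψ (Real.log (2 / t))))) := by
  have hpos : ∀ t : ℝ, 0 < t → 0 < Φ t := by
    intro t ht
    have h1 : Φ (t/2) < Φ t := hmono (by simp; positivity) (by simpa using ht) (by linarith)
    have h2 : (0:ℝ) ≤ Φ (t/2) := hmaps _ (by positivity)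
    linarith
  have hΨpos : ∀ y : ℝ, 0 < y → 0 < Ψ y := by
    intro y hy
    have h1 : (0:ℝ) ≤ Ψ y := hΨmaps hy.le
    rcases h1.lt_or_eq with h | h
    · exact h
    · exfalso
      have h2 := hΨ.2 (Set.mem_Ici.mpr hy.le)
      rw [← h, h0] at h2
      linarith
  have hΨmono : ∀ a b : ℝ, 0 < a → a ≤ b → Ψ a ≤ Ψ b := by
    intro a b ha hab
    by_contra hc
    push_neg at hc
    have hb : 0 < b := lt_of_lt_of_le ha hab
    have h2 := hmono (Set.mem_Ioi.mpr (hΨpos b hb)) (Set.mem_Ioi.mpr (hΨpos a ha)) hc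
    rw [hΨ.2 (Set.mem_Ici.mpr ha.le), hΨ.2 (Set.mem_Ici.mpr hb.le)] at h2
    linarith
  constructor
  · -- part (a)
    refine ⟨1, 2, one_pos, two_pos, ?_⟩
    intro t ht
    have ht0 : (0:ℝ) < t := ht
    have hΦt : 0 < Φ t := hpos t ht0
    constructor
    · -- lower bound
      rw [one_mul]
      by_contra hc
      push_neg at hc
      set y : ℝ := (Φ t / t - deriv Φ t) * t / 2 with hy
      have hy0 : 0 < y := by
        have : 0 < Φ t / t - deriv Φ t := by linarith
        positivity
      have hΨy : 0 < Ψ y := hΨpos y hy0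
      set ε : ℝ := min (Ψ y) t / 2 with hε
      have hε0 : 0 < ε := by
        have := lt_min hΨy ht0
        positivity
      have hεt : ε < t := by
        have h1 : min (Ψ y) t ≤ t := min_le_right _ _
        rw [hε]; linarith
      have hslope := hconv.slope_le_deriv (Set.mem_Ioi.mpr hε0) ht hεt (hdiff t ht).1
      rw [slope_def_field] at hslope
      have hΦε : Φ ε ≤ y := by
        have h1 : ε ≤ Ψ y := by
          have := min_le_left (Ψ y) t
          rw [hε]; linarith
        have h2 := hmono.monotoneOn (Set.mem_Ioi.mpr hε0) (Set.mem_Ioi.mpr hΨy) h1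
        rwa [hΨ.2 (Set.mem_Ici.mpr hy0.le)] at h2
      have hΦεt : Φ ε < Φ t := hmono (Set.mem_Ioi.mpr hε0) ht hεt
      have h3 : (Φ t - Φ ε) / t ≤ (Φ t - Φ ε) / (t - ε) := by
        gcongr <;> linarith
      have h4 : (Φ t - y) / t ≤ (Φ t - Φ ε) / t := by gcongr
      have h7 := (div_le_iff₀ ht0).mp (le_trans h4 (le_trans h3 hslope))
      rw [hy] at h7
      nlinarith [mul_pos (sub_pos.mpr hc) ht0, div_mul_cancel₀ (Φ t) (ne_of_gt ht0)]
    · -- upper bound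
      have hsq : HasDerivAt (fun x => Real.sqrt (Φ x)) (deriv Φ t / (2 * Real.sqrt (Φ t))) t :=
        ((hdiff t ht).1.hasDerivAt.sqrt (ne_of_gt hΦt))
      have h1 := hsqrt.le_slope_of_hasDerivAt Set.self_mem_Ici (Set.mem_Ici.mpr ht0.le) ht0 hsq
      rw [slope_def_field] at h1
      have hsq0 : 0 < Real.sqrt (Φ t) := Real.sqrt_pos.mpr hΦt
      have hms : Real.sqrt (Φ t) * Real.sqrt (Φ t) = Φ t := Real.mul_self_sqrt hΦt.le
      rw [h0, Real.sqrt_zero, sub_zero, sub_zero] at h1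
      rw [div_le_div_iff₀ (by positivity) ht0] at h1
      -- h1 : deriv Φ t * t ≤ Real.sqrt (Φ t) * (2 * Real.sqrt (Φ t))
      have h2 : deriv Φ t * t ≤ 2 * Φ t := by nlinarith
      rw [show (2:ℝ) * (Φ t / t) = 2 * Φ t / t from (mul_div_assoc _ _ _).symm,
        le_div_iff₀ ht0]
      exact h2
  · -- part (b)
    refine ⟨1/4, ⟨by norm_num, by norm_num⟩, 12, by norm_num, ?_⟩
    rintro t ⟨ht0, ht4⟩
    set Lt := Real.log (2 / t) with hLtdef
    have hLtlog2 : Real.log 2 ≤ Lt := by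
      apply Real.log_le_log (by norm_num)
      rw [le_div_iff₀ ht0]; linarith
    have hLt0 : 0 < Lt := lt_of_lt_of_le (Real.log_pos (by norm_num)) hLtlog2
    have hΨLt : 0 < Ψ Lt := hΨpos _ hLt0
    have hG0 : 0 ≤ Lt / Ψ Lt := div_nonneg hLt0.le hΨLt.le
    have key : ∀ k : ℕ, ∀ s : ℝ, s ∈ Set.Ico (t/2^(k+1)) (t/2^k) →
        (s * Real.log (2/s) / Ψ (Real.log (2/s))) / s ≤ ((k:ℝ)+2) * (Lt / Ψ Lt) := by
      rintro k s ⟨hs1, hs2⟩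
      have ha0 : 0 < t/2^(k+1) := by positivity
      have hs0 : 0 < s := lt_of_lt_of_le ha0 hs1
      have hst : s ≤ t := le_trans hs2.le (div_le_self ht0.le (one_le_pow₀ (by norm_num)))
      set Ls := Real.log (2/s) with hLsdef
      have hLs1 : Lt ≤ Ls := by
        apply Real.log_le_log (by positivity)
        rw [div_le_div_iff₀ ht0 hs0]; linarith
      have hLs0 : 0 < Ls := lt_of_lt_of_le hLt0 hLs1
      have hLs2 : Ls ≤ ((k:ℝ)+2) * Lt := by
        have h2a : (2:ℝ)/s ≤ 2/(t/2^(k+1)) := by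
          rw [div_le_div_iff₀ hs0 ha0]; linarith
        have h2b : (2:ℝ)/(t/2^(k+1)) = (2/t) * 2^(k+1) := by
          field_simp
        have h2c : Ls ≤ Real.log ((2/t) * 2^(k+1)) := by
          rw [← h2b]
          exact Real.log_le_log (by positivity) h2a
        rw [Real.log_mul (by positivity) (by positivity), Real.log_pow] at h2c
        have h2d : ((k:ℝ)+1) * Real.log 2 ≤ ((k:ℝ)+1) * Lt :=
          mul_le_mul_of_nonneg_left hLtlog2 (by positivity)
        push_cast at h2c
        linarith
      have hΨLs : Ψ Lt ≤ Ψ Ls := hΨmono _ _ hLt0 hLs1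
      have hcalc : (s * Ls / Ψ Ls) / s = Ls / Ψ Ls := by
        rw [mul_div_assoc, mul_comm s (Ls / Ψ Ls), mul_div_assoc, div_self (ne_of_gt hs0),
          mul_one]
      rw [hcalc]
      calc Ls / Ψ Ls ≤ (((k:ℝ)+2) * Lt) / Ψ Lt := by
            apply div_le_div₀ (by positivity) hLs2 hΨLt hΨLs
        _ = ((k:ℝ)+2) * (Lt / Ψ Lt) := mul_div_assoc _ _ _
    have cover : Set.Ioo (0:ℝ) t ⊆ ⋃ k : ℕ, Set.Ico (t/2^(k+1)) (t/2^k) := by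
      rintro s ⟨hs0, hst⟩
      have hex : ∃ n : ℕ, t / 2^(n+1) ≤ s := by
        obtain ⟨n, hn⟩ := pow_unbounded_of_one_lt (t/s) (by norm_num : (1:ℝ) < 2)
        rw [div_lt_iff₀ hs0] at hn
        refine ⟨n, ?_⟩
        rw [div_le_iff₀ (by positivity)]
        calc t ≤ 2^n * s := hn.le
          _ ≤ s * 2^(n+1) := by rw [pow_succ]; nlinarith [pow_pos (by norm_num : (0:ℝ) < 2) n]
      refine Set.mem_iUnion.mpr ⟨Nat.find hex, Nat.find_spec hex, ?_⟩
      by_cases hk0 : Nat.find hex = 0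
      · rw [hk0]; simpa using hst
      · have hm := Nat.find_min hex (m := Nat.find hex - 1) (by omega)
        push_neg at hm
        have hke : Nat.find hex - 1 + 1 = Nat.find hex := by omega
        rwa [hke] at hm
    have hgeo : ∀ k : ℕ, ((k:ℝ)+2) * 4^k ≤ 6 * 6^k := by
      intro k
      induction k with
      | zero => norm_num
      | succ n ih =>
          push_cast [pow_succ]
          push_cast at ih
          nlinarith [pow_nonneg (by norm_num : (0:ℝ) ≤ 4) n,
            pow_nonneg (by norm_num : (0:ℝ) ≤ 6) n]
    calc ∫⁻ s in Set.Ioo (0:ℝ) t,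
            ENNReal.ofReal ((s * Real.log (2/s) / Ψ (Real.log (2/s))) / s)
        ≤ ∫⁻ s in ⋃ k : ℕ, Set.Ico (t/2^(k+1)) (t/2^k),
            ENNReal.ofReal ((s * Real.log (2/s) / Ψ (Real.log (2/s))) / s) :=
          lintegral_mono_set cover
      _ ≤ ∑' k : ℕ, ∫⁻ s in Set.Ico (t/2^(k+1)) (t/2^k),
            ENNReal.ofReal ((s * Real.log (2/s) / Ψ (Real.log (2/s))) / s) :=
          lintegral_iUnion_le _ _
      _ ≤ ∑' k : ℕ, ENNReal.ofReal (3 * (Lt / Ψ Lt) * t) * (ENNReal.ofReal (3/4))^k := by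
          apply ENNReal.tsum_le_tsum
          intro k
          have hvol : t/2^k - t/2^(k+1) = t/2^(k+1) := by
            field_simp
            ring
          have hstep : ((k:ℝ)+2) / 2^(k+1) ≤ 3 * (3/4)^k := by
            rw [div_pow, ← mul_div_assoc, div_le_div_iff₀ (by positivity) (by positivity)]
            calc ((k:ℝ)+2) * 4^k ≤ 6 * 6^k := hgeo k
              _ = 3 * 3^k * 2^(k+1) := by
                  have h6 : (6:ℝ)^k = 3^k * 2^k := by
                    rw [← mul_pow]; norm_num
                  rw [h6, pow_succ]; ring
          calc ∫⁻ s in Set.Ico (t/2^(k+1)) (t/2^k),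
                  ENNReal.ofReal ((s * Real.log (2/s) / Ψ (Real.log (2/s))) / s)
              ≤ ∫⁻ _ in Set.Ico (t/2^(k+1)) (t/2^k),
                  ENNReal.ofReal (((k:ℝ)+2) * (Lt / Ψ Lt)) :=
                setLIntegral_mono' measurableSet_Ico
                  (fun s hs => ENNReal.ofReal_le_ofReal (key k s hs))
            _ = ENNReal.ofReal (((k:ℝ)+2) * (Lt / Ψ Lt)) *
                  volume (Set.Ico (t/2^(k+1)) (t/2^k)) := setLIntegral_const _ _
            _ = ENNReal.ofReal (((k:ℝ)+2) * (Lt / Ψ Lt)) * ENNReal.ofReal (t/2^(k+1)) := by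
                rw [Real.volume_Ico, hvol]
            _ = ENNReal.ofReal ((((k:ℝ)+2) * (Lt / Ψ Lt)) * (t/2^(k+1))) :=
                (ENNReal.ofReal_mul (mul_nonneg (by positivity) hG0)).symm
            _ ≤ ENNReal.ofReal ((3 * (Lt / Ψ Lt) * t) * (3/4)^k) := by
                apply ENNReal.ofReal_le_ofReal
                calc (((k:ℝ)+2) * (Lt / Ψ Lt)) * (t/2^(k+1))
                    = ((Lt / Ψ Lt) * t) * (((k:ℝ)+2)/2^(k+1)) := by ring
                  _ ≤ ((Lt / Ψ Lt) * t) * (3 * (3/4)^k) :=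
                      mul_le_mul_of_nonneg_left hstep (mul_nonneg hG0 ht0.le)
                  _ = (3 * (Lt / Ψ Lt) * t) * (3/4)^k := by ring
            _ = ENNReal.ofReal (3 * (Lt / Ψ Lt) * t) * (ENNReal.ofReal (3/4))^k := by
                rw [ENNReal.ofReal_mul (mul_nonneg (mul_nonneg (by norm_num) hG0) ht0.le),
                  ENNReal.ofReal_pow (by norm_num)]
      _ = ENNReal.ofReal (3 * (Lt / Ψ Lt) * t) * ∑' k : ℕ, (ENNReal.ofReal (3/4))^k :=
          ENNReal.tsum_mul_left
      _ ≤ ENNReal.ofReal (12 * (t * Lt / Ψ Lt)) := by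
          rw [ENNReal.tsum_geometric]
          have h34 : (1 : ℝ≥0∞) - ENNReal.ofReal (3/4) = ENNReal.ofReal (1/4) := by
            rw [← ENNReal.ofReal_one, ← ENNReal.ofReal_sub _ (by norm_num : (0:ℝ) ≤ 3/4)]
            norm_num
          have h4 : (ENNReal.ofReal ((1:ℝ)/4))⁻¹ = ENNReal.ofReal 4 := by
            rw [show (1/4 : ℝ) = ((4:ℝ))⁻¹ by norm_num,
              ENNReal.ofReal_inv_of_pos (by norm_num), inv_inv]
          rw [h34, h4, ← ENNReal.ofReal_mul (mul_nonneg (mul_nonneg (by norm_num) hG0) ht0.le)]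
          apply ENNReal.ofReal_le_ofReal
          have : 3 * (Lt / Ψ Lt) * t * 4 = 12 * (t * Lt / Ψ Lt) := by ring
          rw [this]
end
end
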